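/- For all n ≥ 1 and n' with 1 ≤ n' ≤ n, and all m ≥ 1 with n ≥ m: μ*(n+n', m+1) ≤ μ*(n,m) + n', where μ*(k,m) is the minimum over k×k matrices over 𝔽₂ with all diagonal entries 1 and every column of Hamming weight exactly m, of max_x |W·x|. -/

import Mathlib

/-!
Take `W` attaining `μ*(n, m)` and border it as `[[W, W S], [P, 1]]`, where the `n'` new columns
repeat columns of `W` (`S` selects them) and `P` puts one extra `1` in every old column. Every
column then has weight `m + 1` and the diagonal stays `1`. For `x = (a, b)` the top half of the
product is `W (a + S b)`, of weight at most `μ*(n, m)`, and the bottom half has only `n'` entries.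
-/

/-- `μ*(n,m)`: minimum over matrices with unit diagonal and column weights
exactly `m` of `max_x |W·x|`. -/
noncomputable def muStar (n m : ℕ) : ℕ :=
  sInf {k : ℕ | ∃ W : Matrix (Fin n) (Fin n) (ZMod 2),
    (∀ i, W i i = 1) ∧ (∀ j, hammingNorm (fun i => W i j) = m) ∧
    k = Finset.univ.sup fun x : Fin n → ZMod 2 => hammingNorm (W.mulVec x)}

open Matrix Finset

section Hamming

variable {ι κ β : Type*} [Fintype ι] [Fintype κ] [DecidableEq β] [Zero β]

theorem hammingNorm_comp_equiv (f : ι → β) (e : κ ≃ ι) : hammingNorm (f ∘ e) = hammingNorm f := by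
  simp only [hammingNorm]
  exact card_equiv e (by simp)

theorem hammingNorm_sumElim (f : ι → β) (g : κ → β) :
    hammingNorm (Sum.elim f g) = hammingNorm f + hammingNorm g := by
  simp only [hammingNorm, card_filter, Fintype.sum_sum_type, Sum.elim_inl, Sum.elim_inr]
  rfl

end Hamming

namespace Matrix

variable {ι κ R : Type*} [Fintype ι] [Fintype κ]

theorem hammingNorm_one_col [DecidableEq κ] [Zero R] [One R] [NeZero (1 : R)] [DecidableEq R]
    (j : κ) : hammingNorm (fun i => (1 : Matrix κ κ R) i j) = 1 := by
  simp [hammingNorm, one_apply, filter_eq']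

/-- Membership in the paper's class `A*`, for any index type and coefficient ring. -/
structure IsUnitDiagColWeight [Zero R] [One R] [DecidableEq R] (W : Matrix ι ι R) (m : ℕ) :
    Prop where
  diag : ∀ i, W i i = 1
  colWeight : ∀ j, hammingNorm (fun i => W i j) = m

theorem IsUnitDiagColWeight.reindex [Zero R] [One R] [DecidableEq R] {W : Matrix ι ι R} {m : ℕ}
    (hW : W.IsUnitDiagColWeight m) (e : ι ≃ κ) : (reindex e e W).IsUnitDiagColWeight m where
  diag i := hW.diag (e.symm i)
  colWeight j := (hammingNorm_comp_equiv _ e.symm).trans (hW.colWeight (e.symm j))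

theorem exists_isUnitDiagColWeight_fin [Zero R] [One R] [NeZero (1 : R)] [DecidableEq R]
    {n m : ℕ} (hm : 1 ≤ m) (hmn : m ≤ n) :
    ∃ W : Matrix (Fin n) (Fin n) R, W.IsUnitDiagColWeight m := by
  have : NeZero n := ⟨by omega⟩
  let v : Fin n → R := fun k => if (k : ℕ) < m then 1 else 0
  have hv : hammingNorm v = m := by simp [hammingNorm, v, Fin.card_filter_val_lt, hmn]
  exact ⟨circulant v, fun i => by simp [v]; omega,
    fun j => (hammingNorm_comp_equiv v (Equiv.subRight j)).trans hv⟩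

section MaxWeight

variable [DecidableEq ι] [Fintype R] [Semiring R] [DecidableEq R]

def maxWeight (W : Matrix κ ι R) : ℕ :=
  univ.sup fun x => hammingNorm (W *ᵥ x)

theorem hammingNorm_mulVec_le_maxWeight (W : Matrix κ ι R) (x : ι → R) :
    hammingNorm (W *ᵥ x) ≤ W.maxWeight :=
  le_sup (f := fun x => hammingNorm (W *ᵥ x)) (mem_univ x)

theorem maxWeight_reindex_le [DecidableEq κ] (W : Matrix ι ι R) (e : ι ≃ κ) :
    (reindex e e W).maxWeight ≤ W.maxWeight :=
  Finset.sup_le fun x _ => by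
    rw [reindex_apply, submatrix_mulVec_equiv, hammingNorm_comp_equiv]
    exact hammingNorm_mulVec_le_maxWeight W _

end MaxWeight

variable [DecidableEq κ] [Semiring R]

/-- With `σ k = k mod n` and `τ i = i mod n'` this is the paper's construction. -/
def extendByDuplicates (W : Matrix ι ι R) (σ : κ → ι) (τ : ι → κ) : Matrix (ι ⊕ κ) (ι ⊕ κ) R :=
  fromBlocks W (W.submatrix id σ) ((1 : Matrix κ κ R).submatrix id τ) 1

theorem IsUnitDiagColWeight.extendByDuplicates [Nontrivial R] [DecidableEq R] {W : Matrix ι ι R}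
    {m : ℕ} (hW : W.IsUnitDiagColWeight m) (σ : κ → ι) (τ : ι → κ) :
    (W.extendByDuplicates σ τ).IsUnitDiagColWeight (m + 1) where
  diag := by rintro (i | k) <;> simp [Matrix.extendByDuplicates, hW.diag]
  colWeight := by
    rintro (j | k)
    · have hcol : (fun i => W.extendByDuplicates σ τ i (.inl j))
          = Sum.elim (fun i => W i j) (fun k => (1 : Matrix κ κ R) k (τ j)) := by
        ext (i | k) <;> rfl
      rw [hcol, hammingNorm_sumElim, hW.colWeight, hammingNorm_one_col]
    · have hcol : (fun i => W.extendByDuplicates σ τ i (.inr k))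
          = Sum.elim (fun i => W i (σ k)) (fun l => (1 : Matrix κ κ R) l k) := by
        ext (i | l) <;> rfl
      rw [hcol, hammingNorm_sumElim, hW.colWeight, hammingNorm_one_col]

theorem exists_hammingNorm_extendByDuplicates_mulVec_le [DecidableEq ι] [DecidableEq R]
    (W : Matrix ι ι R) (σ : κ → ι) (τ : ι → κ) (x : ι ⊕ κ → R) :
    ∃ y, hammingNorm (W.extendByDuplicates σ τ *ᵥ x) ≤ hammingNorm (W *ᵥ y) + Fintype.card κ := by
  have htop : W.submatrix id σ = W * (1 : Matrix ι ι R).submatrix id σ :=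
    (mul_submatrix_one (Equiv.refl ι) σ W).symm
  refine ⟨x ∘ .inl + (1 : Matrix ι ι R).submatrix id σ *ᵥ (x ∘ .inr), ?_⟩
  rw [Matrix.extendByDuplicates, fromBlocks_mulVec, hammingNorm_sumElim, htop, ← mulVec_mulVec,
    ← mulVec_add]
  exact Nat.add_le_add_left hammingNorm_le_card_fintype _

theorem maxWeight_extendByDuplicates_le [DecidableEq ι] [Fintype R] [DecidableEq R]
    (W : Matrix ι ι R) (σ : κ → ι) (τ : ι → κ) :
    (W.extendByDuplicates σ τ).maxWeight ≤ W.maxWeight + Fintype.card κ :=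
  Finset.sup_le fun x _ => by
    obtain ⟨y, hy⟩ := exists_hammingNorm_extendByDuplicates_mulVec_le W σ τ x
    exact hy.trans (Nat.add_le_add_right (hammingNorm_mulVec_le_maxWeight W y) _)

end Matrix

theorem muStar_le_maxWeight {ι : Type*} [Fintype ι] [DecidableEq ι] {n m : ℕ} (e : ι ≃ Fin n)
    {W : Matrix ι ι (ZMod 2)} (hW : W.IsUnitDiagColWeight m) : muStar n m ≤ W.maxWeight := by
  unfold muStar
  refine (Nat.sInf_le ?_).trans (maxWeight_reindex_le W e)
  exact ⟨_, (hW.reindex e).diag, (hW.reindex e).colWeight, rfl⟩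

theorem exists_maxWeight_eq_muStar {n m : ℕ} (hm : 1 ≤ m) (hmn : m ≤ n) :
    ∃ W : Matrix (Fin n) (Fin n) (ZMod 2), W.IsUnitDiagColWeight m ∧ W.maxWeight = muStar n m := by
  obtain ⟨W, hW⟩ := exists_isUnitDiagColWeight_fin (R := ZMod 2) hm hmn
  unfold muStar
  obtain ⟨V, hVdiag, hVcol, hV⟩ := Nat.sInf_mem (s := {k | ∃ V : Matrix (Fin n) (Fin n) (ZMod 2),
    (∀ i, V i i = 1) ∧ (∀ j, hammingNorm (fun i => V i j) = m) ∧ k = V.maxWeight})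
    ⟨_, W, hW.diag, hW.colWeight, rfl⟩
  exact ⟨V, ⟨hVdiag, hVcol⟩, hV.symm⟩

theorem muStar_step_general (n n' m : ℕ) (hn' : 1 ≤ n')
    (hm : 1 ≤ m) (hmn : m ≤ n) :
    muStar (n + n') (m + 1) ≤ muStar n m + n' := by
  obtain ⟨W, hW, hWmax⟩ := exists_maxWeight_eq_muStar hm hmn
  have : NeZero n := ⟨by omega⟩
  have : NeZero n' := ⟨by omega⟩
  let σ : Fin n' → Fin n := fun k => Fin.ofNat n k
  let τ : Fin n → Fin n' := fun i => Fin.ofNat n' i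
  calc muStar (n + n') (m + 1) ≤ (W.extendByDuplicates σ τ).maxWeight :=
        muStar_le_maxWeight finSumFinEquiv (hW.extendByDuplicates σ τ)
    _ ≤ W.maxWeight + n' := by simpa using W.maxWeight_extendByDuplicates_le σ τ
    _ = muStar n m + n' := by rw [hWmax]

/-- `μ*(n+n', m+1) ≤ μ*(n,m) + n'` for `1 ≤ n' ≤ n` and `1 ≤ m ≤ n`. -/
theorem muStar_step (n n' m : ℕ) (hn' : 1 ≤ n') (hn'n : n' ≤ n)
    (hm : 1 ≤ m) (hmn : m ≤ n) :
    muStar (n + n') (m + 1) ≤ muStar n m + n' :=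
  muStar_step_general n n' m hn' hm hmn
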